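/- arXiv:1411.5058 — 2 statements merged into one kernel-verified Lean document; each statement's English description precedes it below -/
import Mathlib

section
/- Let A₁, A₂, A₃ be symmetric positive semidefinite matrices with A₁ + A₂ + A₃ = I. Then the average over all 6 permutations σ of {1,2,3} of A_{σ(1)}A_{σ(2)}A_{σ(3)} is at least -(1/27)·I in the Loewner order. -/
/-!
Expanding `(A₀ + A₁ + A₂)³ = 1` by how many of the three indices coincide, and using
`∑_{j ≠ i} Aⱼ = 1 - Aᵢ`, shows that the sum over all permutations equals
`1 - 3 ∑ Aᵢ² + 2 ∑ Aᵢ³`. Absorbing the constant as `1/27 = ∑ Aᵢ / 27`, the claimed matrix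
becomes `∑ g(Aᵢ)` with `g(x) = x³/3 - x²/2 + 11x/54 = x(x - 3/4)²/3 + 7x/432`, and
`g(M) = (M - 3/4)M(M - 3/4)/3 + 7M/432` is positive semidefinite whenever `M` is.
-/

open Matrix
open scoped ComplexOrder

theorem Equiv.Perm.sum_fin_three {M : Type*} [AddCommMonoid M] (f : Equiv.Perm (Fin 3) → M) :
    ∑ σ, f σ = f 1 + f (swap 0 1) + f (swap 0 2) + f (swap 1 2) +
      f (swap 0 1 * swap 1 2) + f (swap 1 2 * swap 0 1) := by
  rw [show (Finset.univ : Finset (Equiv.Perm (Fin 3))) =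
    {1, swap 0 1, swap 0 2, swap 1 2, swap 0 1 * swap 1 2, swap 1 2 * swap 0 1} by decide]
  rw [Finset.sum_insert (by decide), Finset.sum_insert (by decide), Finset.sum_insert (by decide),
    Finset.sum_insert (by decide), Finset.sum_insert (by decide), Finset.sum_singleton]
  abel

theorem sum_perm_fin_three_mul_of_sum_eq_one {R : Type*} [Ring R] (A : Fin 3 → R)
    (h : A 0 + A 1 + A 2 = 1) :
    ∑ σ : Equiv.Perm (Fin 3), A (σ 0) * A (σ 1) * A (σ 2) =
      1 - 3 • ∑ i, A i ^ 2 + 2 • ∑ i, A i ^ 3 := by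
  have h2 : A 2 = 1 - A 0 - A 1 := by rw [← h]; abel
  simp only [Equiv.Perm.sum_fin_three, Equiv.Perm.coe_one, id_eq, Equiv.Perm.mul_apply,
    Equiv.swap_apply_def, Fin.reduceEq, ↓reduceIte, Fin.sum_univ_three, h2]
  noncomm_ring

theorem Matrix.PosSemidef.posSemidef_cubic {𝕜 m : Type*} [RCLike 𝕜] [Fintype m] [DecidableEq m]
    {M : Matrix m m 𝕜} (hM : M.PosSemidef) :
    ((1 / 3 : ℝ) • M ^ 3 - (1 / 2 : ℝ) • M ^ 2 + (11 / 54 : ℝ) • M).PosSemidef := by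
  set N := M - (3 / 4 : ℝ) • 1
  have hN : Nᴴ = N := by simp [N, hM.isHermitian.eq]
  have hsquare : (1 / 3 : ℝ) • M ^ 3 - (1 / 2 : ℝ) • M ^ 2 + (11 / 54 : ℝ) • M =
      (1 / 3 : ℝ) • (N * M * Nᴴ) + (7 / 432 : ℝ) • M := by
    rw [hN]
    simp only [N, pow_succ, pow_zero, one_mul, sub_mul, mul_sub, smul_mul_assoc, mul_smul_comm,
      mul_one, smul_sub, smul_smul]
    module
  rw [hsquare]
  exact ((hM.mul_mul_conjTranspose_same N).smul (by norm_num)).add (hM.smul (by norm_num))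

theorem stmt8 {n : ℕ} (A : Fin 3 → Matrix (Fin n) (Fin n) ℝ)
    (hA : ∀ i, (A i).PosSemidef)
    (hsum : A 0 + A 1 + A 2 = (1 : Matrix (Fin n) (Fin n) ℝ)) :
    ((1 / 6 : ℝ) • ∑ σ : Equiv.Perm (Fin 3), A (σ 0) * A (σ 1) * A (σ 2) +
      (1 / 27 : ℝ) • (1 : Matrix (Fin n) (Fin n) ℝ)).PosSemidef := by
  have hcubic : (1 / 6 : ℝ) • (1 - 3 • ∑ i, A i ^ 2 + 2 • ∑ i, A i ^ 3) + (1 / 27 : ℝ) • 1 =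
      ∑ i, ((1 / 3 : ℝ) • A i ^ 3 - (1 / 2 : ℝ) • A i ^ 2 + (11 / 54 : ℝ) • A i) := by
    simp only [← hsum, Fin.sum_univ_three]
    module
  rw [sum_perm_fin_three_mul_of_sum_eq_one A hsum, hcubic]
  exact posSemidef_sum _ fun i _ ↦ (hA i).posSemidef_cubic
end

section
/- For any three symmetric positive semidefinite n×n real matrices A₁, A₂, A₃, the operator norm of ∑_{j₁,j₂,j₃=1}^{3} A_{j₁}A_{j₂}A_{j₃} divided by 27 is at least the operator norm of ∑ over all triples (j₁,j₂,j₃) of pairwise distinct indices in {1,2,3} of A_{j₁}A_{j₂}A_{j₃} divided by 6. -/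
/-!
Write `s = a + b + c` and `p` for the sum of the six products `a b c`, `a c b`, …. If
`0 ≤ a, b, c` and `s ≤ t`, then `t - s ≥ 0`, and `(2/9) t³ ∓ p` are explicit sums of nonnegative
multiples of congruences `x y x` with `y ∈ {a, b, c, t - s}` and `x` self-adjoint; hence
`-(2/9) t³ ≤ p ≤ (2/9) t³` in any star-ordered real algebra. For symmetric matrices and `t = ‖s‖`
this gives `‖p‖ ≤ (2/9) ‖s‖³ = (2/9) ‖s³‖`, which is the claim.
-/

open scoped Matrix.Norms.L2Operator MatrixOrder

def symmTripleProd {A : Type*} [Add A] [Mul A] (a b c : A) : A :=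
  a * b * c + a * c * b + b * a * c + b * c * a + c * a * b + c * b * a

theorem Finset.sum_pow_three {ι R : Type*} [Semiring R] (s : Finset ι) (f : ι → R) :
    (∑ i ∈ s, f i) ^ 3 = ∑ i ∈ s, ∑ j ∈ s, ∑ k ∈ s, f i * f j * f k := by
  rw [pow_three, Finset.sum_mul_sum, Finset.sum_mul_sum]
  simp only [Finset.mul_sum, mul_assoc]

theorem sum_distinct_fin_three_eq_symmTripleProd {R : Type*} [Ring R] (f : Fin 3 → R) :
    ∑ p ∈ Finset.univ.filter
        (fun p : Fin 3 × Fin 3 × Fin 3 => p.1 ≠ p.2.1 ∧ p.1 ≠ p.2.2 ∧ p.2.1 ≠ p.2.2),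
      f p.1 * f p.2.1 * f p.2.2 = symmTripleProd (f 0) (f 1) (f 2) := by
  simp only [ne_eq, Finset.sum_filter, Fintype.sum_prod_type, Fin.sum_univ_three, Fin.isValue,
    not_true_eq_false, and_false, ↓reduceIte, zero_ne_one, not_false_eq_true, and_true, zero_add,
    Fin.reduceEq, one_ne_zero, add_zero, and_self, symmTripleProd]
  abel

section Certificates

variable {A : Type*} [Ring A] [Algebra ℝ A] (a b c : A) (t : ℝ) {s d T : A}

theorem algebraMap_sub_symmTripleProd (hs : s = a + b + c) (hT : T = algebraMap ℝ A t)
    (hd : d = T - s) :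
    algebraMap ℝ A (2 / 9 * t ^ 3) - symmTripleProd a b c =
      (1 / 18 : ℝ) • (((2 : ℝ) • T - (3 : ℝ) • a - s) * a * ((2 : ℝ) • T - (3 : ℝ) • a - s))
      + (1 / 18 : ℝ) • (((2 : ℝ) • T - (3 : ℝ) • b - s) * b * ((2 : ℝ) • T - (3 : ℝ) • b - s))
      + (1 / 18 : ℝ) • (((2 : ℝ) • T - (3 : ℝ) • c - s) * c * ((2 : ℝ) • T - (3 : ℝ) • c - s))
      + (5 / 6 : ℝ) • ((b - c) * a * (b - c)) + (5 / 6 : ℝ) • ((a - c) * b * (a - c))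
      + (5 / 6 : ℝ) • ((a - b) * c * (a - b))
      + (2 / 9 : ℝ) • (s * d * s) + (2 / 3 : ℝ) • (a * d * a) + (2 / 3 : ℝ) • (b * d * b)
      + (2 / 3 : ℝ) • (c * d * c) + (2 / 9 : ℝ) • (T * d * T) := by
  subst hs hT hd
  simp only [symmTripleProd, Algebra.algebraMap_eq_smul_one, smul_mul_assoc, mul_smul_comm,
    add_mul, mul_add, sub_mul, mul_sub, smul_add, smul_sub, smul_smul, mul_one, one_mul]
  module

theorem algebraMap_add_symmTripleProd (hs : s = a + b + c) (hT : T = algebraMap ℝ A t)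
    (hd : d = T - s) :
    algebraMap ℝ A (2 / 9 * t ^ 3) + symmTripleProd a b c =
      (1 / 72 : ℝ) • (((4 : ℝ) • T + (3 : ℝ) • s - (9 : ℝ) • a) * a *
        ((4 : ℝ) • T + (3 : ℝ) • s - (9 : ℝ) • a))
      + (1 / 72 : ℝ) • (((4 : ℝ) • T + (3 : ℝ) • s - (9 : ℝ) • b) * b *
        ((4 : ℝ) • T + (3 : ℝ) • s - (9 : ℝ) • b))
      + (1 / 72 : ℝ) • (((4 : ℝ) • T + (3 : ℝ) • s - (9 : ℝ) • c) * c *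
        ((4 : ℝ) • T + (3 : ℝ) • s - (9 : ℝ) • c))
      + (1 / 24 : ℝ) • (((3 : ℝ) • a - s) * a * ((3 : ℝ) • a - s))
      + (1 / 24 : ℝ) • (((3 : ℝ) • b - s) * b * ((3 : ℝ) • b - s))
      + (1 / 24 : ℝ) • (((3 : ℝ) • c - s) * c * ((3 : ℝ) • c - s))
      + (1 / 2 : ℝ) • ((s - a) * a * (s - a)) + (1 / 2 : ℝ) • ((s - b) * b * (s - b))
      + (1 / 2 : ℝ) • ((s - c) * c * (s - c)) + (2 / 9 : ℝ) • (T * d * T)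
      + (1 / 3 : ℝ) • ((a - b) * d * (a - b)) + (1 / 3 : ℝ) • ((a - c) * d * (a - c))
      + (1 / 3 : ℝ) • ((b - c) * d * (b - c)) := by
  subst hs hT hd
  simp only [symmTripleProd, Algebra.algebraMap_eq_smul_one, smul_mul_assoc, mul_smul_comm,
    add_mul, mul_add, sub_mul, mul_sub, smul_add, smul_sub, smul_smul, mul_one, one_mul]
  module

end Certificates

section StarOrderedAlgebra

variable {A : Type*} [Ring A] [StarRing A] [PartialOrder A] [StarOrderedRing A] [Algebra ℝ A]
  [StarModule ℝ A]

theorem smul_nonneg_of_starOrderedRing {r : ℝ} {x : A} (hr : 0 ≤ r) (hx : 0 ≤ x) :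
    0 ≤ r • x := by
  have h := (IsSelfAdjoint.algebraMap A (.all √r)).conjugate_nonneg hx
  rwa [Algebra.commutes, mul_assoc, ← map_mul, Real.mul_self_sqrt hr, ← Algebra.commutes,
    ← Algebra.smul_def] at h

theorem smul_conjugate_nonneg {r : ℝ} {x y : A} (hr : 0 ≤ r) (hy : 0 ≤ y)
    (hx : IsSelfAdjoint x) : 0 ≤ r • (x * y * x) :=
  smul_nonneg_of_starOrderedRing hr (hx.conjugate_nonneg hy)

variable {a b c : A} {t : ℝ}

theorem symmTripleProd_le_algebraMap (ha : 0 ≤ a) (hb : 0 ≤ b) (hc : 0 ≤ c)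
    (h : a + b + c ≤ algebraMap ℝ A t) :
    symmTripleProd a b c ≤ algebraMap ℝ A (2 / 9 * t ^ 3) := by
  have hd : 0 ≤ algebraMap ℝ A t - (a + b + c) := sub_nonneg.2 h
  rw [← sub_nonneg, algebraMap_sub_symmTripleProd a b c t rfl rfl rfl]
  repeat' apply add_nonneg
  all_goals apply smul_conjugate_nonneg (by norm_num) (by assumption)
  all_goals simp [isSelfAdjoint_iff, ha.isSelfAdjoint.star_eq, hb.isSelfAdjoint.star_eq,
    hc.isSelfAdjoint.star_eq, (IsSelfAdjoint.algebraMap A (.all t)).star_eq]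

theorem neg_algebraMap_le_symmTripleProd (ha : 0 ≤ a) (hb : 0 ≤ b) (hc : 0 ≤ c)
    (h : a + b + c ≤ algebraMap ℝ A t) :
    -algebraMap ℝ A (2 / 9 * t ^ 3) ≤ symmTripleProd a b c := by
  have hd : 0 ≤ algebraMap ℝ A t - (a + b + c) := sub_nonneg.2 h
  rw [neg_le_iff_add_nonneg', algebraMap_add_symmTripleProd a b c t rfl rfl rfl]
  repeat' apply add_nonneg
  all_goals apply smul_conjugate_nonneg (by norm_num) (by assumption)
  all_goals simp [isSelfAdjoint_iff, ha.isSelfAdjoint.star_eq, hb.isSelfAdjoint.star_eq,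
    hc.isSelfAdjoint.star_eq, (IsSelfAdjoint.algebraMap A (.all t)).star_eq]

end StarOrderedAlgebra

section IsometricCFC

variable {A : Type*} [NormedRing A] [StarRing A] [NormedAlgebra ℝ A] [PartialOrder A]
  [StarOrderedRing A] [IsometricContinuousFunctionalCalculus ℝ A IsSelfAdjoint]
  [NonnegSpectrumClass ℝ A]

theorem IsSelfAdjoint.le_algebraMap_norm {a : A} (ha : IsSelfAdjoint a) :
    a ≤ algebraMap ℝ A ‖a‖ :=
  (le_algebraMap_iff_spectrum_le ha).2 fun x hx =>
    (le_abs_self x).trans (IsometricContinuousFunctionalCalculus.norm_spectrum_le a hx ha)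

theorem norm_le_of_neg_algebraMap_le_of_le_algebraMap [StarModule ℝ A] {a : A} {r : ℝ}
    (hr : 0 ≤ r) (hl : -algebraMap ℝ A r ≤ a) (hu : a ≤ algebraMap ℝ A r) : ‖a‖ ≤ r := by
  have ha : IsSelfAdjoint a := by
    simpa using (IsSelfAdjoint.algebraMap A (.all r)).sub (sub_nonneg.2 hu).isSelfAdjoint
  rw [← map_neg, algebraMap_le_iff_le_spectrum ha] at hl
  rw [le_algebraMap_iff_spectrum_le ha] at hu
  rw [← cfc_id' ℝ a]
  exact norm_cfc_le hr fun x hx => abs_le.2 ⟨hl x hx, hu x hx⟩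

theorem norm_symmTripleProd_le [StarModule ℝ A] {a b c : A} (ha : 0 ≤ a) (hb : 0 ≤ b)
    (hc : 0 ≤ c) : ‖symmTripleProd a b c‖ ≤ 2 / 9 * ‖a + b + c‖ ^ 3 := by
  have hs : a + b + c ≤ algebraMap ℝ A ‖a + b + c‖ :=
    (IsSelfAdjoint.of_nonneg (add_nonneg (add_nonneg ha hb) hc)).le_algebraMap_norm
  exact norm_le_of_neg_algebraMap_le_of_le_algebraMap (by positivity)
    (neg_algebraMap_le_symmTripleProd ha hb hc hs) (symmTripleProd_le_algebraMap ha hb hc hs)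

end IsometricCFC

theorem IsSelfAdjoint.norm_pow_three {E : Type*} [NormedRing E] [StarRing E] [CStarRing E]
    {a : E} (ha : IsSelfAdjoint a) : ‖a ^ 3‖ = ‖a‖ ^ 3 := by
  refine le_antisymm (norm_pow_le' a (by norm_num)) ?_
  rcases (norm_nonneg a).eq_or_lt with h | h
  · rw [← h]; simp
  have h4 : ‖a‖ ^ 4 ≤ ‖a‖ * ‖a ^ 3‖ :=
    calc ‖a‖ ^ 4 = ‖a ^ 4‖ := (ha.norm_pow_two_pow 2).symm
      _ = ‖a * a ^ 3‖ := by rw [← pow_succ']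
      _ ≤ ‖a‖ * ‖a ^ 3‖ := norm_mul_le _ _
  nlinarith

theorem stmt10 {n : ℕ} (A : Fin 3 → Matrix (Fin n) (Fin n) ℝ)
    (hA : ∀ i, (A i).PosSemidef) :
    (1 / 27 : ℝ) * ‖∑ j₁ : Fin 3, ∑ j₂ : Fin 3, ∑ j₃ : Fin 3, A j₁ * A j₂ * A j₃‖ ≥
      (1 / 6 : ℝ) *
        ‖∑ p ∈ Finset.univ.filter
            (fun p : Fin 3 × Fin 3 × Fin 3 => p.1 ≠ p.2.1 ∧ p.1 ≠ p.2.2 ∧ p.2.1 ≠ p.2.2),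
          A p.1 * A p.2.1 * A p.2.2‖ := by
  have hA' : ∀ i, 0 ≤ A i := fun i => (hA i).nonneg
  have hS : IsSelfAdjoint (A 0 + A 1 + A 2) :=
    .of_nonneg (add_nonneg (add_nonneg (hA' 0) (hA' 1)) (hA' 2))
  have hp := norm_symmTripleProd_le (hA' 0) (hA' 1) (hA' 2)
  rw [sum_distinct_fin_three_eq_symmTripleProd, ← Finset.sum_pow_three, Fin.sum_univ_three,
    hS.norm_pow_three]
  linarith
end
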